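/- Let G be a totally disconnected locally compact Hausdorff topological group and g ∈ G. If U and V are compact open subgroups of G that are both tidy for g, then [V : V ∩ g⁻¹Vg] = [U : U ∩ g⁻¹Ug]; that is, the index [V : V ∩ g⁻¹Vg] does not depend on the choice of the tidy subgroup V. -/

import Mathlib

/-!
For a compact open subgroup `U` write `s(U) = [gUg⁻¹ : U ∩ gUg⁻¹]` and
`aₙ(U) = [gⁿUg⁻ⁿ : U ∩ gⁿUg⁻ⁿ]`. Submultiplicativity gives `aₙ(U) ≤ s(U)ⁿ`, and for two compact
open subgroups `aₙ(U)` and `aₙ(V)` agree up to a factor independent of `n`. If `U` is tidy, then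
`[gⁿU₊g⁻ⁿ : U₊] = s(U)ⁿ` since `U₊ ≤ gU₊g⁻¹`, and by Baire's theorem the compact set `U ∩ U₊₊` lies
in a single `gᴺU₊g⁻ᴺ`, whence `s(U)ⁿ ≤ s(U)ᴺ aₙ(U)`. So `s(V)ⁿ ≤ C s(U)ⁿ` for all `n` when `V` is
tidy, which forces `s(V) ≤ s(U)`.
-/

open MeasureTheory Pointwise

variable {G : Type*}

/-- The conjugate subgroup `gUg⁻¹`. -/
def conjSubgroup [Group G] (g : G) (U : Subgroup G) : Subgroup G :=
  U.map (MulAut.conj g).toMonoidHom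

/-- A subgroup is compact open if its carrier set is compact and open. -/
def Subgroup.IsCompactOpen [Group G] [TopologicalSpace G] (U : Subgroup G) : Prop :=
  IsCompact (U : Set G) ∧ IsOpen (U : Set G)

/-- `U₊ = ⋂_{n ≥ 0} gⁿ U g⁻ⁿ`. -/
def plusSubgroup [Group G] (g : G) (U : Subgroup G) : Subgroup G :=
  ⨅ n : ℕ, conjSubgroup (g ^ n) U

/-- `U₋ = ⋂_{n ≥ 0} g⁻ⁿ U gⁿ`. -/
def minusSubgroup [Group G] (g : G) (U : Subgroup G) : Subgroup G :=
  ⨅ n : ℕ, conjSubgroup (g⁻¹ ^ n) U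

/-- `U` is tidy above for `g` if `[gU₊g⁻¹ : U₊] = [gUg⁻¹ : gUg⁻¹ ∩ U]`. -/
def TidyAbove [Group G] (g : G) (U : Subgroup G) : Prop :=
  (plusSubgroup g U).relIndex (conjSubgroup g (plusSubgroup g U)) = U.relIndex (conjSubgroup g U)

/-- `U₊₊ = ⋃_{n ≥ 0} gⁿ U₊ g⁻ⁿ` as a set. -/
def plusPlusSet [Group G] (g : G) (U : Subgroup G) : Set G :=
  ⋃ n : ℕ, ((conjSubgroup (g ^ n) (plusSubgroup g U) : Subgroup G) : Set G)

/-- `U₋₋ = ⋃_{n ≥ 0} g⁻ⁿ U₋ gⁿ` as a set. -/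
def minusMinusSet [Group G] (g : G) (U : Subgroup G) : Set G :=
  ⋃ n : ℕ, ((conjSubgroup (g⁻¹ ^ n) (minusSubgroup g U) : Subgroup G) : Set G)

/-- `U` is tidy below for `g` if `U₊₊` and `U₋₋` are closed. -/
def TidyBelow [Group G] [TopologicalSpace G] (g : G) (U : Subgroup G) : Prop :=
  IsClosed (plusPlusSet g U) ∧ IsClosed (minusMinusSet g U)

/-- `U` is tidy for `g` if it is tidy above and tidy below for `g`. -/
def Tidy [Group G] [TopologicalSpace G] (g : G) (U : Subgroup G) : Prop :=
  TidyAbove g U ∧ TidyBelow g U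

section Conjugation

variable [Group G]

theorem mem_conjSubgroup {g x : G} {U : Subgroup G} :
    x ∈ conjSubgroup g U ↔ g⁻¹ * x * g ∈ U := by
  constructor
  · rintro ⟨y, hy, rfl⟩
    simpa [MulAut.conj, mul_assoc] using hy
  · exact fun h => ⟨g⁻¹ * x * g, h, by simp [MulAut.conj, mul_assoc]⟩

theorem conjSubgroup_conjSubgroup (a b : G) (U : Subgroup G) :
    conjSubgroup a (conjSubgroup b U) = conjSubgroup (a * b) U := by
  ext x
  simp [mem_conjSubgroup, mul_assoc]

theorem conjSubgroup_one (U : Subgroup G) : conjSubgroup 1 U = U := by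
  ext x
  simp [mem_conjSubgroup]

theorem coe_conjSubgroup (g : G) (U : Subgroup G) :
    (conjSubgroup g U : Set G) = (fun x => g⁻¹ * x * g) ⁻¹' U :=
  Set.ext fun _ => mem_conjSubgroup

theorem conjSubgroup_mono (g : G) : Monotone (conjSubgroup g) :=
  fun _ _ h => Subgroup.map_mono h

theorem relIndex_conjSubgroup (g : G) (H K : Subgroup G) :
    (conjSubgroup g H).relIndex (conjSubgroup g K) = H.relIndex K :=
  Subgroup.relIndex_map_map_of_injective H K (MulAut.conj g).injective

theorem monotone_conjSubgroup_pow {g : G} {P : Subgroup G} (h : P ≤ conjSubgroup g P) :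
    Monotone fun n : ℕ => conjSubgroup (g ^ n) P :=
  monotone_nat_of_le_succ fun n => by
    simpa only [pow_succ, ← conjSubgroup_conjSubgroup] using conjSubgroup_mono (g ^ n) h

theorem le_conjSubgroup_pow {g : G} {P : Subgroup G} (h : P ≤ conjSubgroup g P) (n : ℕ) :
    P ≤ conjSubgroup (g ^ n) P := by
  simpa only [pow_zero, conjSubgroup_one] using monotone_conjSubgroup_pow h n.zero_le

theorem relIndex_conjSubgroup_pow {g : G} {P : Subgroup G} (h : P ≤ conjSubgroup g P) (n : ℕ) :
    P.relIndex (conjSubgroup (g ^ n) P) = P.relIndex (conjSubgroup g P) ^ n := by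
  induction n with
  | zero => simp [conjSubgroup_one]
  | succ n ih =>
    have hstep : conjSubgroup (g ^ n) P ≤ conjSubgroup (g ^ (n + 1)) P :=
      monotone_conjSubgroup_pow h n.le_succ
    rw [← Subgroup.relIndex_mul_relIndex _ _ _ (le_conjSubgroup_pow h n) hstep, ih, pow_succ,
      ← conjSubgroup_conjSubgroup, relIndex_conjSubgroup, pow_succ]

theorem Subgroup.relIndex_le_relIndex_mul_relIndex {H K L : Subgroup G}
    (hHK : H.relIndex K ≠ 0) (hKL : K.relIndex L ≠ 0) :
    H.relIndex L ≤ H.relIndex K * K.relIndex L :=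
  calc H.relIndex L
      ≤ (H ⊓ K).relIndex L :=
        relIndex_le_of_le_left inf_le_left
          (relIndex_inf_ne_zero (relIndex_ne_zero_trans hHK hKL) hKL)
    _ = H.relIndex (K ⊓ L) * K.relIndex L := (relIndex_inf_mul_relIndex H K L).symm
    _ ≤ H.relIndex K * K.relIndex L := by gcongr; exact relIndex_le_of_le_right inf_le_left hHK

end Conjugation

section PlusSubgroup

variable [Group G] (g : G) (U : Subgroup G)

theorem plusSubgroup_le : plusSubgroup g U ≤ U := by
  have h : plusSubgroup g U ≤ conjSubgroup (g ^ 0) U := iInf_le _ 0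
  rwa [pow_zero, conjSubgroup_one] at h

theorem plusSubgroup_le_conjSubgroup : plusSubgroup g U ≤ conjSubgroup g (plusSubgroup g U) := by
  intro x hx
  simp only [plusSubgroup, Subgroup.mem_iInf, mem_conjSubgroup] at hx ⊢
  intro n
  simpa [pow_succ', mul_assoc] using hx (n + 1)

theorem conjSubgroup_pow_plusSubgroup_subset_plusPlusSet (n : ℕ) :
    (conjSubgroup (g ^ n) (plusSubgroup g U) : Set G) ⊆ plusPlusSet g U :=
  Set.subset_iUnion_of_subset n le_rfl

end PlusSubgroup

section Topology

variable [Group G] [TopologicalSpace G] [IsTopologicalGroup G]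

theorem Subgroup.IsCompactOpen.conj {U : Subgroup G} (hU : U.IsCompactOpen) (g : G) :
    (conjSubgroup g U).IsCompactOpen := by
  let φ : G ≃ₜ G := (Homeomorph.mulLeft g⁻¹).trans (Homeomorph.mulRight g)
  rw [Subgroup.IsCompactOpen, coe_conjSubgroup]
  exact ⟨φ.isCompact_preimage.2 hU.1, hU.2.preimage φ.continuous⟩

theorem Subgroup.relIndex_ne_zero_of_isOpen_of_isCompact {H K : Subgroup G}
    (hH : IsOpen (H : Set G)) (hK : IsCompact (K : Set G)) : H.relIndex K ≠ 0 := by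
  have : CompactSpace K := isCompact_iff_compactSpace.mp hK
  have := (H.subgroupOf K).quotient_finite_of_isOpen (hH.preimage continuous_subtype_val)
  exact Subgroup.index_ne_zero_of_finite

theorem Subgroup.IsCompactOpen.relIndex_ne_zero {H K : Subgroup G} (hH : H.IsCompactOpen)
    (hK : K.IsCompactOpen) : H.relIndex K ≠ 0 :=
  relIndex_ne_zero_of_isOpen_of_isCompact hH.2 hK.1

theorem isClosed_conjSubgroup_pow_plusSubgroup {U : Subgroup G} (hU : IsOpen (U : Set G))
    (g : G) (n : ℕ) : IsClosed (conjSubgroup (g ^ n) (plusSubgroup g U) : Set G) := by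
  have hP : IsClosed (plusSubgroup g U : Set G) := by
    rw [plusSubgroup, Subgroup.coe_iInf]
    refine isClosed_iInter fun n => Subgroup.isClosed_of_isOpen _ ?_
    rw [coe_conjSubgroup]
    exact hU.preimage (by fun_prop)
  rw [coe_conjSubgroup]
  exact hP.preimage (by fun_prop)

theorem IsCompact.exists_subset_of_monotone_of_isClosed_iUnion [LocallyCompactSpace G]
    {K : ℕ → Subgroup G} (hmono : Monotone K) (hK : ∀ n, IsClosed (K n : Set G))
    (hunion : IsClosed (⋃ n, (K n : Set G))) {C : Set G} (hC : IsCompact C)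
    (hCK : C ⊆ ⋃ n, (K n : Set G)) : ∃ n, C ⊆ K n := by
  -- Baire in the locally compact group `⨆ n, K n`: some `K N` is open in it, hence so are all
  -- later ones, and these form a directed open cover of `C`.
  set H := ⨆ n, K n
  have hH : (H : Set G) = ⋃ n, (K n : Set G) := Subgroup.coe_iSup_of_directed hmono.directed_le
  have hHc : Topology.IsClosedEmbedding ((↑) : H → G) :=
    (hH ▸ hunion).isClosedEmbedding_subtypeVal
  have : LocallyCompactSpace H := hHc.locallyCompactSpace
  have hcover : ⋃ n, (((K n).subgroupOf H : Subgroup H) : Set H) = Set.univ := by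
    ext x
    have hx : (x : G) ∈ (H : Set G) := x.2
    simpa [Subgroup.mem_subgroupOf, hH] using hx
  obtain ⟨N, x, hx⟩ := nonempty_interior_of_iUnion_of_closed
    (fun n => (hK n).preimage continuous_subtype_val) hcover
  have hopen : IsOpen (((K N).subgroupOf H : Subgroup H) : Set H) :=
    Subgroup.isOpen_of_mem_nhds _ (mem_interior_iff_mem_nhds.1 hx)
  obtain ⟨n, hn⟩ := (hHc.isCompact_preimage hC).elim_directed_cover
    (fun n => (((K (N + n)).subgroupOf H : Subgroup H) : Set H))
    (fun n => Subgroup.isOpen_mono (Subgroup.subgroupOf_mono H (hmono (N.le_add_right n))) hopen)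
    (fun c _ => by
      obtain ⟨m, hm⟩ := Set.mem_iUnion.mp (hH ▸ c.2 : (c : G) ∈ ⋃ n, (K n : Set G))
      exact Set.mem_iUnion.mpr ⟨m, hmono (m.le_add_left N) hm⟩)
    (Monotone.directed_le fun a b hab =>
      SetLike.coe_subset_coe.mpr (Subgroup.subgroupOf_mono H (hmono (by omega))))
  refine ⟨N + n, fun c hc => ?_⟩
  have hcH : c ∈ H := by rw [← SetLike.mem_coe, hH]; exact hCK hc
  exact hn (a := ⟨c, hcH⟩) hc

end Topology

theorem Nat.le_of_forall_pow_le_mul_pow {a b c : ℕ} (h : ∀ n, b ^ n ≤ c * a ^ n) : b ≤ a := by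
  by_contra! hab
  rcases Nat.eq_zero_or_pos a with rfl | ha
  · have h1 := h 1
    rw [pow_one, pow_one, mul_zero] at h1
    omega
  have ha' : (0 : ℚ) < a := by exact_mod_cast ha
  obtain ⟨n, hn⟩ := pow_unbounded_of_one_lt (c : ℚ)
    ((one_lt_div ha').2 (by exact_mod_cast hab : (a : ℚ) < b))
  rw [div_pow, lt_div_iff₀ (pow_pos ha' n)] at hn
  exact (h n).not_gt (by exact_mod_cast hn)

section IndexGrowth

variable [Group G] [TopologicalSpace G] [IsTopologicalGroup G] {U V : Subgroup G}

theorem relIndex_conjSubgroup_pow_le (hU : U.IsCompactOpen) (g : G) (n : ℕ) :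
    U.relIndex (conjSubgroup (g ^ n) U) ≤ U.relIndex (conjSubgroup g U) ^ n := by
  induction n with
  | zero => simp [conjSubgroup_one]
  | succ n ih =>
    calc U.relIndex (conjSubgroup (g ^ (n + 1)) U)
        ≤ U.relIndex (conjSubgroup g U) *
            (conjSubgroup g U).relIndex (conjSubgroup (g * g ^ n) U) := by
          rw [← pow_succ']
          exact Subgroup.relIndex_le_relIndex_mul_relIndex
            (hU.relIndex_ne_zero (hU.conj g)) ((hU.conj g).relIndex_ne_zero (hU.conj _))
      _ ≤ U.relIndex (conjSubgroup g U) ^ (n + 1) := by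
          rw [← conjSubgroup_conjSubgroup, relIndex_conjSubgroup, pow_succ']
          gcongr

theorem relIndex_conjSubgroup_le_mul (hU : U.IsCompactOpen) (hV : V.IsCompactOpen) (c : G) :
    V.relIndex (conjSubgroup c V) ≤
      V.relIndex U * U.relIndex (conjSubgroup c U) * U.relIndex V :=
  calc V.relIndex (conjSubgroup c V)
      ≤ V.relIndex U * U.relIndex (conjSubgroup c V) :=
        Subgroup.relIndex_le_relIndex_mul_relIndex (hV.relIndex_ne_zero hU)
          (hU.relIndex_ne_zero (hV.conj c))
    _ ≤ V.relIndex U *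
          (U.relIndex (conjSubgroup c U) * (conjSubgroup c U).relIndex (conjSubgroup c V)) := by
        gcongr
        exact Subgroup.relIndex_le_relIndex_mul_relIndex (hU.relIndex_ne_zero (hU.conj c))
          ((hU.conj c).relIndex_ne_zero (hV.conj c))
    _ = V.relIndex U * U.relIndex (conjSubgroup c U) * U.relIndex V := by
        rw [relIndex_conjSubgroup, mul_assoc]

theorem TidyAbove.exists_pow_le_mul_relIndex_conjSubgroup_pow [LocallyCompactSpace G] {g : G}
    (hUa : TidyAbove g U) (hUb : IsClosed (plusPlusSet g U)) (hU : U.IsCompactOpen) :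
    ∃ N : ℕ, ∀ n : ℕ, U.relIndex (conjSubgroup g U) ^ n ≤
      U.relIndex (conjSubgroup g U) ^ N * U.relIndex (conjSubgroup (g ^ n) U) := by
  set P := plusSubgroup g U
  have hP : P ≤ conjSubgroup g P := plusSubgroup_le_conjSubgroup g U
  have hPn : ∀ n : ℕ, P.relIndex (conjSubgroup (g ^ n) P) = U.relIndex (conjSubgroup g U) ^ n :=
    fun n => by rw [relIndex_conjSubgroup_pow hP, hUa]
  obtain ⟨N, hN⟩ := (hU.1.inter_right hUb).exists_subset_of_monotone_of_isClosed_iUnion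
    (monotone_conjSubgroup_pow hP)
    (isClosed_conjSubgroup_pow_plusSubgroup hU.2 g) hUb Set.inter_subset_right
  refine ⟨N, fun n => ?_⟩
  have hUP : U ⊓ conjSubgroup (g ^ n) P ≤ conjSubgroup (g ^ N) P := fun x hx =>
    hN ⟨hx.1, conjSubgroup_pow_plusSubgroup_subset_plusPlusSet g U n hx.2⟩
  calc U.relIndex (conjSubgroup g U) ^ n
      = P.relIndex (U ⊓ conjSubgroup (g ^ n) P) * (U ⊓ conjSubgroup (g ^ n) P).relIndex
          (conjSubgroup (g ^ n) P) := by
        rw [← hPn, Subgroup.relIndex_mul_relIndex _ _ _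
          (le_inf (plusSubgroup_le g U) (le_conjSubgroup_pow hP n)) inf_le_right]
    _ ≤ U.relIndex (conjSubgroup g U) ^ N * U.relIndex (conjSubgroup (g ^ n) U) := by
        rw [Subgroup.inf_relIndex_right]
        gcongr
        · rw [← hPn]
          exact Subgroup.relIndex_le_of_le_right hUP
            (by rw [hPn]; exact pow_ne_zero _ (hU.relIndex_ne_zero (hU.conj g)))
        · exact Subgroup.relIndex_le_of_le_right (conjSubgroup_mono _ (plusSubgroup_le g U))
            (hU.relIndex_ne_zero (hU.conj _))

theorem TidyAbove.relIndex_conjSubgroup_le [LocallyCompactSpace G] {g : G}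
    (hVa : TidyAbove g V) (hVb : IsClosed (plusPlusSet g V)) (hV : V.IsCompactOpen)
    (hU : U.IsCompactOpen) :
    V.relIndex (conjSubgroup g V) ≤ U.relIndex (conjSubgroup g U) := by
  obtain ⟨N, hN⟩ := hVa.exists_pow_le_mul_relIndex_conjSubgroup_pow hVb hV
  refine Nat.le_of_forall_pow_le_mul_pow
    (c := V.relIndex (conjSubgroup g V) ^ N * (V.relIndex U * U.relIndex V)) fun n => ?_
  calc V.relIndex (conjSubgroup g V) ^ n
      ≤ V.relIndex (conjSubgroup g V) ^ N * V.relIndex (conjSubgroup (g ^ n) V) := hN n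
    _ ≤ V.relIndex (conjSubgroup g V) ^ N *
          (V.relIndex U * U.relIndex (conjSubgroup g U) ^ n * U.relIndex V) := by
        gcongr
        exact (relIndex_conjSubgroup_le_mul hU hV _).trans
          (by gcongr; exact relIndex_conjSubgroup_pow_le hU g n)
    _ = _ := by ring

end IndexGrowth

theorem tidy_index_independent_general
    [Group G] [TopologicalSpace G] [IsTopologicalGroup G] [LocallyCompactSpace G]
    (g : G) (U V : Subgroup G) (hU : U.IsCompactOpen) (hV : V.IsCompactOpen)
    (hUt : Tidy g U) (hVt : Tidy g V) :
    (conjSubgroup g⁻¹ V).relIndex V = (conjSubgroup g⁻¹ U).relIndex U := by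
  have hconj (K : Subgroup G) :
      (conjSubgroup g⁻¹ K).relIndex K = K.relIndex (conjSubgroup g K) := by
    rw [← relIndex_conjSubgroup g, conjSubgroup_conjSubgroup, mul_inv_cancel, conjSubgroup_one]
  rw [hconj, hconj]
  exact le_antisymm (hVt.1.relIndex_conjSubgroup_le hVt.2.1 hV hU)
    (hUt.1.relIndex_conjSubgroup_le hUt.2.1 hU hV)

/-- The index `[V : V ∩ g⁻¹Vg]` is the same for all tidy subgroups. -/
theorem tidy_index_independent
    [Group G] [TopologicalSpace G] [IsTopologicalGroup G] [LocallyCompactSpace G] [T2Space G]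
    [TotallyDisconnectedSpace G]
    (g : G) (U V : Subgroup G) (hU : U.IsCompactOpen) (hV : V.IsCompactOpen)
    (hUt : Tidy g U) (hVt : Tidy g V) :
    (conjSubgroup g⁻¹ V).relIndex V = (conjSubgroup g⁻¹ U).relIndex U :=
  tidy_index_independent_general g U V hU hV hUt hVt
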